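/- Let B be a set partition of [m] and C a nonempty set partition of [n], and set A = B|C, r' = ℓ(B), r = ℓ(A) = r' + ℓ(C). For any nonempty subsets P ⊆ [r'] and Q ⊆ {r'+1,…,r} of block indices of A, std(A_{P∪Q}) = std(A_P) | std(A_Q). Consequently, if γ is a set composition of [r] with two consecutive blocks γ_{i−1} ⊆ [r'] and γ_i ⊆ {r'+1,…,r}, and φ(γ) is the set composition obtained by merging γ_{i−1} and γ_i into the single block γ_{i−1} ∪ γ_i, then γ[A] = φ(γ)[A]. -/

import Mathlib

open Finset

/-- `[n] = {1, …, n}` as a finset of naturals. -/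
def seg (n : ℕ) : Finset ℕ := Finset.Icc 1 n

/-- A (raw) collection of blocks. -/
abbrev Blocks := Finset (Finset ℕ)

/-- The ground set (union of the blocks). -/
def ground (A : Blocks) : Finset ℕ := A.sup id

/-- `A` is a set partition of the finite set `X`: nonempty pairwise disjoint blocks with union `X`. -/
def IsPartitionOf (A : Blocks) (X : Finset ℕ) : Prop :=
  (∀ B ∈ A, B.Nonempty) ∧ (A : Set (Finset ℕ)).PairwiseDisjoint id ∧ ground A = X

/-- `A` is a set partition of `[n]`. -/
def IsSP (A : Blocks) (n : ℕ) : Prop := IsPartitionOf A (seg n)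

/-- The unique increasing bijection from `X` onto `[#X]`. -/
def stdFun (X : Finset ℕ) (x : ℕ) : ℕ := (X.filter (· < x)).card + 1

/-- Standardization of a collection of blocks. -/
def stdP (A : Blocks) : Blocks := A.image fun B => B.image (stdFun (ground A))

/-- Shift all entries of all blocks up by `k`. -/
def shiftP (A : Blocks) (k : ℕ) : Blocks := A.image fun B => B.image (· + k)

/-- Concatenation `A | B` of set partitions: shift `B` up by the weight of `A`. -/
def concatP (A B : Blocks) : Blocks := A ∪ shiftP B (ground A).card

/-- The `i`-th block of `A` (1-based), where blocks are ordered by increasing minima. -/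
def blockAt (A : Blocks) (i : ℕ) : Finset ℕ :=
  (A.filter fun B => (A.filter fun C => C.min ≤ B.min).card = i).sup id

/-- `A_J` : the subcollection of blocks of `A` indexed by `J`. -/
def subColl (A : Blocks) (J : Finset ℕ) : Blocks := J.image (blockAt A)

/-- `A` is an atomic set partition of `[n]`. -/
def IsAtomicSP (A : Blocks) (n : ℕ) : Prop :=
  IsSP A n ∧ 1 ≤ n ∧
    ¬ ∃ m B C, 0 < m ∧ m < n ∧ IsSP B m ∧ IsSP C (n - m) ∧ A = concatP B C

/-- Raw set compositions: words whose letters are finsets of naturals. -/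
abbrev SComp := List (Finset ℕ)

/-- The union of the letters of a word. -/
def sunion (γ : SComp) : Finset ℕ := γ.foldr (· ∪ ·) ∅

/-- `γ` is a set composition of `K`. -/
def IsSCompOf (γ : SComp) (K : Finset ℕ) : Prop :=
  (∀ B ∈ γ, B.Nonempty) ∧ γ.Pairwise Disjoint ∧ sunion γ = K

/-- `γ[A] = std(A_{γ₁}) | std(A_{γ₂}) | ⋯ | std(A_{γₛ})`. -/
def applyComp (γ : SComp) (A : Blocks) : Blocks :=
  (γ.map fun g => stdP (subColl A g)).foldr concatP ∅

abbrev NCSym := Blocks →₀ ℚ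

/-- The basis element of `NCSym` indexed by a set partition. -/
noncomputable def bas (A : Blocks) : NCSym := Finsupp.single A 1

/-- `p(A) = ∑_{γ ∈ Γ'(r)} (-1)^{ℓ(γ)-1} γ[A]`. -/
noncomputable def pNC (A : Blocks) (r : ℕ) : NCSym :=
  ∑ᶠ γ ∈ {γ : SComp | IsSCompOf γ (seg r) ∧ 1 ∈ γ.headI},
    ((-1 : ℚ) ^ (γ.length - 1)) • bas (applyComp γ A)

open TensorProduct in
/-- `Δ(A) = ∑_{K ⊔ L = [r]} std(A_K) ⊗ std(A_L)` on a basis element. -/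
noncomputable def deltaB (A : Blocks) : NCSym ⊗[ℚ] NCSym :=
  ∑ K ∈ (seg A.card).powerset,
    bas (stdP (subColl A K)) ⊗ₜ[ℚ] bas (stdP (subColl A (seg A.card \ K)))

/-- The coproduct of `NCSym`, extended linearly. -/
noncomputable def Delta : NCSym →ₗ[ℚ] TensorProduct ℚ NCSym NCSym :=
  Finsupp.lsum ℚ fun A => LinearMap.toSpanSingleton ℚ _ (deltaB A)

/-! If `B ⊢ [m]`, every entry of `B` is smaller than every entry of the shifted copy of `C` in
`B|C`. Blocks are indexed by increasing minima, so the first `ℓ(B)` blocks of `B|C` are those of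
`B` and the remaining ones come from `C`; hence `A_P` lies entirely below `A_Q`. Standardizing a
union `D ∪ E` with `D` below `E` standardizes `D` and `E` separately and puts the second on top
of the first, which is `std(D) | std(E)`. The merging statement then follows because `|` is
associative on partitions of initial segments `[a]`. -/

lemma card_seg (n : ℕ) : (seg n).card = n := by simp [seg]

lemma mem_ground {A : Blocks} {x : ℕ} : x ∈ ground A ↔ ∃ X ∈ A, x ∈ X := by
  simp [ground, Finset.mem_sup]

lemma subset_ground {A : Blocks} {X : Finset ℕ} (hX : X ∈ A) : X ⊆ ground A :=
  Finset.le_sup (f := id) hX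

lemma ground_union (D E : Blocks) : ground (D ∪ E) = ground D ∪ ground E :=
  Finset.sup_union

lemma ground_image_image (A : Blocks) (f : ℕ → ℕ) :
    ground (A.image (Finset.image f)) = (ground A).image f := by
  ext y
  simp only [mem_ground, Finset.mem_image]
  constructor
  · rintro ⟨_, ⟨X, hX, rfl⟩, hy⟩
    obtain ⟨x, hx, rfl⟩ := Finset.mem_image.mp hy
    exact ⟨x, ⟨X, hX, hx⟩, rfl⟩
  · rintro ⟨x, ⟨X, hX, hx⟩, rfl⟩
    exact ⟨_, ⟨X, hX, rfl⟩, Finset.mem_image_of_mem f hx⟩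

lemma ground_subColl_subset {A : Blocks} {P S : Finset ℕ} (h : ∀ i ∈ P, blockAt A i ⊆ S) :
    ground (subColl A P) ⊆ S := by
  rw [ground, subColl, Finset.sup_image]
  exact Finset.sup_le h

lemma subColl_union (A : Blocks) (P Q : Finset ℕ) :
    subColl A (P ∪ Q) = subColl A P ∪ subColl A Q := Finset.image_union _ _

lemma stdFun_strictMonoOn (X : Finset ℕ) : StrictMonoOn (stdFun X) X := by
  intro a ha b _ hab
  have hsub : X.filter (· < a) ⊂ X.filter (· < b) :=
    (Finset.ssubset_iff_of_subset (Finset.monotone_filter_right X fun _ _ h => h.trans hab)).mpr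
      ⟨a, Finset.mem_filter.mpr ⟨ha, hab⟩, by simp⟩
  simpa [stdFun] using Finset.card_lt_card hsub

lemma stdFun_mem_seg {X : Finset ℕ} {x : ℕ} (hx : x ∈ X) : stdFun X x ∈ seg X.card := by
  have hsub : X.filter (· < x) ⊂ X :=
    (Finset.ssubset_iff_of_subset (Finset.filter_subset _ X)).mpr ⟨x, hx, by simp⟩
  have := Finset.card_lt_card hsub
  simp only [stdFun, seg, Finset.mem_Icc]
  omega

lemma image_stdFun (X : Finset ℕ) : X.image (stdFun X) = seg X.card :=
  Finset.eq_of_subset_of_card_le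
    (Finset.image_subset_iff.mpr fun _ hx => stdFun_mem_seg hx)
    (by rw [Finset.card_image_of_injOn (stdFun_strictMonoOn X).injOn, card_seg])

lemma ground_stdP (D : Blocks) : ground (stdP D) = seg (ground D).card := by
  rw [stdP, ground_image_image, image_stdFun]

lemma stdFun_union_of_le {X Y : Finset ℕ} {x : ℕ} (h : ∀ y ∈ Y, x ≤ y) :
    stdFun (X ∪ Y) x = stdFun X x := by
  have hY : Y.filter (· < x) = ∅ := Finset.filter_eq_empty_iff.mpr fun y hy => not_lt.mpr (h y hy)
  rw [stdFun, Finset.filter_union, hY, Finset.union_empty, stdFun]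

lemma stdFun_union_of_lt {X Y : Finset ℕ} {x : ℕ} (hXY : Disjoint X Y) (h : ∀ y ∈ X, y < x) :
    stdFun (X ∪ Y) x = stdFun Y x + X.card := by
  have hX : X.filter (· < x) = X := Finset.filter_eq_self.mpr h
  rw [stdFun, Finset.filter_union, hX,
    Finset.card_union_of_disjoint (hXY.mono_right (Finset.filter_subset _ _)), stdFun]
  omega

def Precedes (D E : Blocks) : Prop := ∀ x ∈ ground D, ∀ y ∈ ground E, x < y

lemma stdP_union_of_precedes {D E : Blocks} (hDE : Precedes D E) :
    stdP (D ∪ E) = concatP (stdP D) (stdP E) := by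
  have hdisj : Disjoint (ground D) (ground E) :=
    Finset.disjoint_left.mpr fun x hxD hxE => lt_irrefl x (hDE x hxD x hxE)
  rw [concatP, ground_stdP, card_seg, stdP, stdP, stdP, shiftP, Finset.image_union,
    Finset.image_image, ground_union]
  congr 1
  · refine Finset.image_congr fun X hX => Finset.image_congr fun x hx => ?_
    exact stdFun_union_of_le fun y hy => (hDE x (subset_ground hX hx) y hy).le
  · refine Finset.image_congr fun X hX => ?_
    rw [Function.comp_apply, Finset.image_image]
    refine Finset.image_congr fun x hx => ?_
    exact stdFun_union_of_lt hdisj fun y hy => hDE y hy x (subset_ground hX hx)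

lemma shiftP_union (D E : Blocks) (k : ℕ) : shiftP (D ∪ E) k = shiftP D k ∪ shiftP E k :=
  Finset.image_union _ _

lemma shiftP_shiftP (D : Blocks) (j k : ℕ) : shiftP (shiftP D j) k = shiftP D (j + k) := by
  rw [shiftP, shiftP, Finset.image_image]
  refine Finset.image_congr fun X _ => ?_
  rw [Function.comp_apply, Finset.image_image]
  exact Finset.image_congr fun x _ => by simp [Nat.add_assoc]

lemma concatP_of_ground_eq_seg {D : Blocks} {a : ℕ} (hD : ground D = seg a) (E : Blocks) :
    concatP D E = D ∪ shiftP E a := by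
  rw [concatP, hD, card_seg]

lemma ground_concatP {D E : Blocks} {a b : ℕ} (hD : ground D = seg a) (hE : ground E = seg b) :
    ground (concatP D E) = seg (a + b) := by
  rw [concatP_of_ground_eq_seg hD, ground_union, shiftP, ground_image_image, hD, hE]
  ext x
  simp only [seg, Finset.mem_union, Finset.mem_image, Finset.mem_Icc]
  constructor
  · rintro (h | ⟨y, hy, rfl⟩) <;> omega
  · intro h
    rcases le_or_gt x a with hx | hx
    · exact Or.inl ⟨h.1, hx⟩
    · exact Or.inr ⟨x - a, by omega, by omega⟩

lemma concatP_assoc {D E : Blocks} {a b : ℕ} (hD : ground D = seg a) (hE : ground E = seg b)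
    (F : Blocks) : concatP (concatP D E) F = concatP D (concatP E F) := by
  rw [concatP_of_ground_eq_seg (ground_concatP hD hE), concatP_of_ground_eq_seg hD,
    concatP_of_ground_eq_seg hD, concatP_of_ground_eq_seg hE, shiftP_union, shiftP_shiftP,
    Finset.union_assoc, Nat.add_comm b a]

lemma applyComp_cons (g : Finset ℕ) (γ : SComp) (A : Blocks) :
    applyComp (g :: γ) A = concatP (stdP (subColl A g)) (applyComp γ A) := rfl

lemma applyComp_merge {A : Blocks} {g₁ g₂ : Finset ℕ}
    (h : stdP (subColl A (g₁ ∪ g₂)) = concatP (stdP (subColl A g₁)) (stdP (subColl A g₂)))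
    (δ₁ δ₂ : SComp) :
    applyComp (δ₁ ++ g₁ :: g₂ :: δ₂) A = applyComp (δ₁ ++ (g₁ ∪ g₂) :: δ₂) A := by
  induction δ₁ with
  | nil =>
    simp only [List.nil_append, applyComp_cons, h]
    exact (concatP_assoc (ground_stdP _) (ground_stdP _) _).symm
  | cons g δ ih => simp only [List.cons_append, applyComp_cons, ih]

lemma mem_of_mem_blockAt {A : Blocks} {i x : ℕ} (hx : x ∈ blockAt A i) :
    ∃ X ∈ A, (A.filter fun Y => Y.min ≤ X.min).card = i ∧ x ∈ X := by
  obtain ⟨X, hX, hxX⟩ := Finset.mem_sup.mp hx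
  obtain ⟨hXA, hXi⟩ := Finset.mem_filter.mp hX
  exact ⟨X, hXA, hXi, hxX⟩

lemma min_lt_min_of_precedes {D E : Blocks} (hD : ∀ X ∈ D, X.Nonempty) (hDE : Precedes D E)
    {X Z : Finset ℕ} (hX : X ∈ D) (hZ : Z ∈ E) : X.min < Z.min := by
  rw [← Finset.coe_min' (hD X hX)]
  exact (Finset.lt_inf_iff (WithTop.coe_lt_top _)).mpr fun z hz => WithTop.coe_lt_coe.mpr
    (hDE _ (subset_ground hX (X.min'_mem _)) z (subset_ground hZ hz))

lemma card_filter_min_le_of_mem_left {D E : Blocks} (hD : ∀ X ∈ D, X.Nonempty) (hDE : Precedes D E)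
    {X : Finset ℕ} (hX : X ∈ D) :
    ((D ∪ E).filter fun Y => Y.min ≤ X.min).card ≤ D.card := by
  refine Finset.card_le_card fun Y hY => ?_
  obtain ⟨hYDE, hYX⟩ := Finset.mem_filter.mp hY
  rcases Finset.mem_union.mp hYDE with hYD | hYE
  · exact hYD
  · exact absurd hYX (min_lt_min_of_precedes hD hDE hX hYE).not_ge

lemma lt_card_filter_min_le_of_mem_right {D E : Blocks} (hD : ∀ X ∈ D, X.Nonempty)
    (hDE : Precedes D E) {Z : Finset ℕ} (hZ : Z ∈ E) :
    D.card < ((D ∪ E).filter fun Y => Y.min ≤ Z.min).card := by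
  have hZD : Z ∉ D := fun hZD => lt_irrefl _ (min_lt_min_of_precedes hD hDE hZD hZ)
  have hsub : insert Z D ⊆ (D ∪ E).filter fun Y => Y.min ≤ Z.min := by
    intro Y hY
    rcases Finset.mem_insert.mp hY with rfl | hYD
    · exact Finset.mem_filter.mpr ⟨Finset.mem_union_right _ hZ, le_rfl⟩
    · exact Finset.mem_filter.mpr
        ⟨Finset.mem_union_left _ hYD, (min_lt_min_of_precedes hD hDE hYD hZ).le⟩
  calc D.card < (insert Z D).card := by rw [Finset.card_insert_of_notMem hZD]; omega
    _ ≤ _ := Finset.card_le_card hsub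

lemma blockAt_union_subset_left {D E : Blocks} (hD : ∀ X ∈ D, X.Nonempty) (hDE : Precedes D E)
    {i : ℕ} (hi : i ≤ D.card) : blockAt (D ∪ E) i ⊆ ground D := by
  intro x hx
  obtain ⟨X, hX, rfl, hxX⟩ := mem_of_mem_blockAt hx
  rcases Finset.mem_union.mp hX with hXD | hXE
  · exact subset_ground hXD hxX
  · exact absurd hi (lt_card_filter_min_le_of_mem_right hD hDE hXE).not_ge

lemma blockAt_union_subset_right {D E : Blocks} (hD : ∀ X ∈ D, X.Nonempty) (hDE : Precedes D E)
    {i : ℕ} (hi : D.card < i) : blockAt (D ∪ E) i ⊆ ground E := by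
  intro x hx
  obtain ⟨X, hX, rfl, hxX⟩ := mem_of_mem_blockAt hx
  rcases Finset.mem_union.mp hX with hXD | hXE
  · exact absurd hi (card_filter_min_le_of_mem_left hD hDE hXD).not_gt
  · exact subset_ground hXE hxX

lemma precedes_subColl_union {D E : Blocks} (hD : ∀ X ∈ D, X.Nonempty) (hDE : Precedes D E)
    {P Q : Finset ℕ} (hP : ∀ i ∈ P, i ≤ D.card) (hQ : ∀ j ∈ Q, D.card < j) :
    Precedes (subColl (D ∪ E) P) (subColl (D ∪ E) Q) :=
  fun x hx y hy => hDE x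
    (ground_subColl_subset (fun i hi => blockAt_union_subset_left hD hDE (hP i hi)) hx) y
    (ground_subColl_subset (fun j hj => blockAt_union_subset_right hD hDE (hQ j hj)) hy)

lemma precedes_shiftP {D E : Blocks} {m n : ℕ} (hD : ground D = seg m) (hE : ground E = seg n) :
    Precedes D (shiftP E m) := by
  intro x hx y hy
  rw [shiftP, ground_image_image, hE] at hy
  obtain ⟨z, hz, rfl⟩ := Finset.mem_image.mp hy
  rw [hD, seg, Finset.mem_Icc] at hx
  rw [seg, Finset.mem_Icc] at hz
  omega

lemma stdP_subColl_concatP {B C : Blocks} {m n : ℕ} (hB : IsSP B m) (hC : ground C = seg n)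
    {P Q : Finset ℕ} (hP : ∀ i ∈ P, i ≤ B.card) (hQ : ∀ j ∈ Q, B.card < j) :
    stdP (subColl (concatP B C) (P ∪ Q)) =
      concatP (stdP (subColl (concatP B C) P)) (stdP (subColl (concatP B C) Q)) := by
  rw [concatP_of_ground_eq_seg hB.2.2, subColl_union]
  exact stdP_union_of_precedes (precedes_subColl_union hB.1 (precedes_shiftP hB.2.2 hC) hP hQ)

theorem ncsym_std_concat_merge_general (m n r' r : ℕ) (B C : Blocks)
    (hB : IsSP B m) (hC : IsSP C n)
    (hr' : B.card = r')
    (A : Blocks) (hA : A = concatP B C) :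
    (∀ P Q : Finset ℕ, P.Nonempty → Q.Nonempty → P ⊆ seg r' → Q ⊆ Finset.Icc (r' + 1) r →
        stdP (subColl A (P ∪ Q)) = concatP (stdP (subColl A P)) (stdP (subColl A Q))) ∧
    (∀ (δ₁ δ₂ : SComp) (g₁ g₂ : Finset ℕ),
        IsSCompOf (δ₁ ++ g₁ :: g₂ :: δ₂) (seg r) → g₁ ⊆ seg r' → g₂ ⊆ Finset.Icc (r' + 1) r →
        applyComp (δ₁ ++ g₁ :: g₂ :: δ₂) A = applyComp (δ₁ ++ (g₁ ∪ g₂) :: δ₂) A) := by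
  subst hr' hA
  have key : ∀ P Q : Finset ℕ, P ⊆ seg B.card → Q ⊆ Finset.Icc (B.card + 1) r →
      stdP (subColl (concatP B C) (P ∪ Q)) =
        concatP (stdP (subColl (concatP B C) P)) (stdP (subColl (concatP B C) Q)) :=
    fun P Q hP hQ => stdP_subColl_concatP hB hC.2.2
      (fun i hi => (Finset.mem_Icc.mp (hP hi)).2) (fun j hj => (Finset.mem_Icc.mp (hQ hj)).1)
  exact ⟨fun P Q _ _ => key P Q,
    fun δ₁ δ₂ g₁ g₂ _ hg₁ hg₂ => applyComp_merge (key g₁ g₂ hg₁ hg₂) δ₁ δ₂⟩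

/-- Let `A = B|C` with `B ⊢ [m]`, `C ⊢ [n]` nonempty, `r' = ℓ(B)`,
`r = ℓ(A) = r' + ℓ(C)`.  (i) For nonempty `P ⊆ [r']` and `Q ⊆ {r'+1,…,r}`,
`std(A_{P∪Q}) = std(A_P) | std(A_Q)`.  (ii) Hence merging two consecutive blocks
`γ_{i-1} ⊆ [r']` and `γ_i ⊆ {r'+1,…,r}` of a set composition `γ` of `[r]` does not change
`γ[A]`: `γ[A] = φ(γ)[A]`. -/
theorem ncsym_std_concat_merge (m n r' r : ℕ) (B C : Blocks)
    (hB : IsSP B m) (hC : IsSP C n) (hCne : C ≠ ∅)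
    (hr' : B.card = r') (hr : r = r' + C.card)
    (A : Blocks) (hA : A = concatP B C) :
    (∀ P Q : Finset ℕ, P.Nonempty → Q.Nonempty → P ⊆ seg r' → Q ⊆ Finset.Icc (r' + 1) r →
        stdP (subColl A (P ∪ Q)) = concatP (stdP (subColl A P)) (stdP (subColl A Q))) ∧
    (∀ (δ₁ δ₂ : SComp) (g₁ g₂ : Finset ℕ),
        IsSCompOf (δ₁ ++ g₁ :: g₂ :: δ₂) (seg r) → g₁ ⊆ seg r' → g₂ ⊆ Finset.Icc (r' + 1) r →
        applyComp (δ₁ ++ g₁ :: g₂ :: δ₂) A = applyComp (δ₁ ++ (g₁ ∪ g₂) :: δ₂) A) :=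
  ncsym_std_concat_merge_general m n r' r B C hB hC hr' A hA
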